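/- If N ≥ 8 is divisible by 8, then for every integer k the size of the k̄-monomial minimal solution modulo N is at most N. -/

import Mathlib

/-!
Write `N = 2 ^ a * q` with `a ≥ 3` and `q` odd, and `E = matE k`. It suffices to find a positive
even `m ≤ N` with `E ^ m = 1`; even exponents are what make the Chinese remainder theorem cheap,
since the lcm of two even numbers is at most half their product.

* Modulo `8` one checks directly that `E ^ 6 = 1` or `E ^ 8 = 1`.
* Modulo an odd prime `p`, complete the square: `E = c + s` with `s ^ 2 = c ^ 2 - 1`. Frobenius
  gives `E ^ p = c + (c ^ 2 - 1) ^ ((p - 1) / 2) s`, which is `c`, `E` or `E⁻¹` by Euler's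
  criterion, so `E ^ m = 1` for `m = 2p`, `p - 1` or `p + 1`.
* If `p ∣ n` and `E ^ m ≡ 1 mod n`, then modulo `n * p` we have `E ^ m = 1 + t` with
  `t ^ 2 = 0` and `p t = 0`, hence `E ^ (m p) = 1`. So the bounds `2 ^ a` and `2 p ^ e` pass from
  `8` and `p` to higher prime powers.
-/
def matE {N : ℕ} (a : ZMod N) : Matrix (Fin 2) (Fin 2) (ZMod N) := !![a, -1; 1, 0]

/-- `M_m(k,…,k) = ±Id` over `ℤ/Nℤ` (constant tuple, so a matrix power). -/
def isMonSol {N : ℕ} (k : ZMod N) (m : ℕ) : Prop :=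
  matE k ^ m = 1 ∨ matE k ^ m = -1

/-- `r` is the size of the `k`-monomial minimal solution modulo `N`. -/
def minMonSize {N : ℕ} (k : ZMod N) (r : ℕ) : Prop :=
  0 < r ∧ isMonSol k r ∧ ∀ m, 0 < m → isMonSol k m → r ≤ m

theorem one_add_pow_of_mul_self_eq_zero {R : Type*} [Semiring R] {t : R} (ht : t * t = 0)
    (n : ℕ) : (1 + t) ^ n = 1 + n • t := by
  induction n with
  | zero => simp
  | succ n ih =>
    rw [pow_succ, ih]
    simp only [add_mul, mul_add, one_mul, mul_one, smul_mul_assoc, ht, smul_zero, add_zero,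
      succ_nsmul]
    abel

namespace ZMod

theorem exists_eq_natCast_mul_of_castHom_eq_zero {n p : ℕ} {x : ZMod (n * p)}
    (hx : castHom (dvd_mul_right n p) (ZMod n) x = 0) : ∃ y, x = n * y := by
  obtain ⟨a, rfl⟩ := intCast_surjective x
  rw [map_intCast, intCast_zmod_eq_zero_iff_dvd] at hx
  obtain ⟨c, rfl⟩ := hx
  exact ⟨c, by push_cast; rfl⟩

theorem eq_zero_of_castHom_eq_zero_of_coprime {m n : ℕ} (hmn : m.Coprime n) {x : ZMod (m * n)}
    (hm : castHom (dvd_mul_right m n) (ZMod m) x = 0)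
    (hn : castHom (dvd_mul_left n m) (ZMod n) x = 0) : x = 0 := by
  obtain ⟨a, rfl⟩ := intCast_surjective x
  rw [map_intCast, intCast_zmod_eq_zero_iff_dvd] at hm hn
  rw [intCast_zmod_eq_zero_iff_dvd, Nat.cast_mul]
  exact (Nat.isCoprime_iff_coprime.mpr hmn).mul_dvd hm hn

end ZMod

namespace Matrix

variable {ι : Type*} [Fintype ι] [DecidableEq ι]

theorem pow_mul_eq_one_of_castHom_pow_eq_one {n p : ℕ} (hp : p ∣ n)
    {A : Matrix ι ι (ZMod (n * p))} {m : ℕ}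
    (h : (ZMod.castHom (dvd_mul_right n p) (ZMod n)).mapMatrix A ^ m = 1) :
    A ^ (m * p) = 1 := by
  have hz : (ZMod.castHom (dvd_mul_right n p) (ZMod n)).mapMatrix (A ^ m - 1) = 0 := by
    rw [map_sub, map_pow, h, map_one, sub_self]
  have hker : ∀ i j, ∃ y, (A ^ m - 1) i j = n * y := fun i j ↦
    ZMod.exists_eq_natCast_mul_of_castHom_eq_zero (congrFun (congrFun hz i) j)
  choose Y hY using hker
  have ht : A ^ m - 1 = (n : ZMod (n * p)) • of Y := by ext i j; simp [hY]
  have hnn : (n : ZMod (n * p)) * n = 0 := by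
    rw [← Nat.cast_mul, ZMod.natCast_eq_zero_iff]; exact mul_dvd_mul_left n hp
  have hnp : (p : ZMod (n * p)) * n = 0 := by
    rw [← Nat.cast_mul, mul_comm, ZMod.natCast_self]
  have hsq : (A ^ m - 1) * (A ^ m - 1) = 0 := by
    rw [ht, smul_mul_smul_comm, hnn, zero_smul]
  rw [pow_mul, ← add_sub_cancel (1 : Matrix ι ι _) (A ^ m), one_add_pow_of_mul_self_eq_zero hsq,
    ht, ← Nat.cast_smul_eq_nsmul (ZMod (n * p)), smul_smul, hnp, zero_smul, add_zero]

theorem pow_eq_one_of_castHom_pow_eq_one_of_coprime {m n : ℕ} (hmn : m.Coprime n)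
    {A : Matrix ι ι (ZMod (m * n))} {e : ℕ}
    (hm : (ZMod.castHom (dvd_mul_right m n) (ZMod m)).mapMatrix A ^ e = 1)
    (hn : (ZMod.castHom (dvd_mul_left n m) (ZMod n)).mapMatrix A ^ e = 1) : A ^ e = 1 := by
  have hm' : (ZMod.castHom (dvd_mul_right m n) (ZMod m)).mapMatrix (A ^ e - 1) = 0 := by
    rw [map_sub, map_pow, hm, map_one, sub_self]
  have hn' : (ZMod.castHom (dvd_mul_left n m) (ZMod n)).mapMatrix (A ^ e - 1) = 0 := by
    rw [map_sub, map_pow, hn, map_one, sub_self]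
  rw [← sub_eq_zero]
  ext i j
  exact ZMod.eq_zero_of_castHom_eq_zero_of_coprime hmn (congrFun (congrFun hm' i) j)
    (congrFun (congrFun hn' i) j)

end Matrix

theorem RingHom.mapMatrix_matE {m n : ℕ} (f : ZMod n →+* ZMod m) (a : ZMod n) :
    f.mapMatrix (matE a) = matE (f a) := by
  ext i j
  fin_cases i <;> fin_cases j <;> simp [matE]

theorem castHom_mapMatrix_matE_intCast {m n : ℕ} (h : m ∣ n) (k : ℤ) :
    (ZMod.castHom h (ZMod m)).mapMatrix (matE (k : ZMod n)) = matE (k : ZMod m) := by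
  rw [RingHom.mapMatrix_matE, map_intCast]

theorem matE_mul_sub_matE {N : ℕ} (a : ZMod N) : matE a * (a • 1 - matE a) = 1 := by
  ext i j
  fin_cases i <;> fin_cases j <;> simp [matE, Matrix.mul_apply, Fin.sum_univ_two]

theorem sub_matE_mul_matE {N : ℕ} (a : ZMod N) : (a • 1 - matE a) * matE a = 1 := by
  ext i j
  fin_cases i <;> fin_cases j <;> simp [matE, Matrix.mul_apply, Fin.sum_univ_two]

theorem matE_two_mul_sub_sq {N : ℕ} (c : ZMod N) :
    (matE (2 * c) - c • 1) * (matE (2 * c) - c • 1) = (c * c - 1) • 1 := by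
  ext i j
  fin_cases i <;> fin_cases j <;> simp [matE, Matrix.mul_apply, Fin.sum_univ_two] <;> ring

theorem matE_two_mul_pow_prime {p : ℕ} [Fact p.Prime] (hp : p ≠ 2) (c : ZMod p) :
    matE (2 * c) ^ p = c • 1 + (c * c - 1) ^ (p / 2) • (matE (2 * c) - c • 1) := by
  set s := matE (2 * c) - c • 1
  have hcomm : Commute (c • (1 : Matrix (Fin 2) (Fin 2) (ZMod p))) s :=
    (Commute.one_left s).smul_left c
  have hp_odd : p = 2 * (p / 2) + 1 := (Nat.two_mul_div_two_add_one_of_odd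
    ((Fact.out : p.Prime).odd_of_ne_two hp)).symm
  have hsp : s ^ p = (c * c - 1) ^ (p / 2) • s := by
    calc s ^ p = (s * s) ^ (p / 2) * s := by
          rw [← sq, ← pow_mul, ← pow_succ]; exact congrArg (s ^ ·) hp_odd
      _ = _ := by rw [matE_two_mul_sub_sq, smul_pow, one_pow, smul_one_mul]
  calc matE (2 * c) ^ p = (c • 1 + s) ^ p := by rw [add_sub_cancel]
    _ = (c • 1) ^ p + s ^ p := add_pow_char_of_commute p hcomm
    _ = _ := by rw [smul_pow, one_pow, ZMod.pow_card, hsp]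

def HasEvenPeriodLE {M : Type*} [Monoid M] (A : M) (B : ℕ) : Prop :=
  ∃ m, 0 < m ∧ Even m ∧ m ≤ B ∧ A ^ m = 1

theorem Nat.two_mul_lcm_le_mul_of_even {a b : ℕ} (ha : 0 < a) (ha2 : Even a) (hb2 : Even b) :
    2 * a.lcm b ≤ a * b := by
  rw [← Nat.gcd_mul_lcm a b]
  refine Nat.mul_le_mul_right _ (Nat.le_of_dvd (Nat.gcd_pos_of_pos_left b ha) ?_)
  exact Nat.dvd_gcd ha2.two_dvd hb2.two_dvd

theorem HasEvenPeriodLE.matE_mul {n p B : ℕ} {k : ℤ} (hp0 : 0 < p) (hp : p ∣ n)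
    (h : HasEvenPeriodLE (matE (k : ZMod n)) B) :
    HasEvenPeriodLE (matE (k : ZMod (n * p))) (B * p) := by
  obtain ⟨m, hm0, hm2, hmB, hm⟩ := h
  refine ⟨m * p, Nat.mul_pos hm0 hp0, hm2.mul_right p, Nat.mul_le_mul_right p hmB, ?_⟩
  refine Matrix.pow_mul_eq_one_of_castHom_pow_eq_one hp ?_
  rwa [castHom_mapMatrix_matE_intCast]

theorem HasEvenPeriodLE.matE_mul_of_coprime {m n B₁ B₂ B : ℕ} {k : ℤ} (hmn : m.Coprime n)
    (h₁ : HasEvenPeriodLE (matE (k : ZMod m)) B₁)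
    (h₂ : HasEvenPeriodLE (matE (k : ZMod n)) B₂)
    (hB : B₁ * B₂ ≤ 2 * B) :
    HasEvenPeriodLE (matE (k : ZMod (m * n))) B := by
  obtain ⟨e₁, he₁0, he₁2, he₁B, he₁⟩ := h₁
  obtain ⟨e₂, he₂0, he₂2, he₂B, he₂⟩ := h₂
  refine ⟨e₁.lcm e₂, Nat.lcm_pos he₁0 he₂0,
    even_iff_two_dvd.mpr (he₁2.two_dvd.trans (Nat.dvd_lcm_left e₁ e₂)), ?_, ?_⟩
  · have := Nat.two_mul_lcm_le_mul_of_even he₁0 he₁2 he₂2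
    have := Nat.mul_le_mul he₁B he₂B
    omega
  · refine Matrix.pow_eq_one_of_castHom_pow_eq_one_of_coprime hmn ?_ ?_
    · rw [castHom_mapMatrix_matE_intCast]
      obtain ⟨c, hc⟩ := Nat.dvd_lcm_left e₁ e₂
      rw [hc, pow_mul, he₁, one_pow]
    · rw [castHom_mapMatrix_matE_intCast]
      obtain ⟨c, hc⟩ := Nat.dvd_lcm_right e₁ e₂
      rw [hc, pow_mul, he₂, one_pow]

theorem hasEvenPeriodLE_matE_prime {p : ℕ} [Fact p.Prime] (hp : p ≠ 2) (k : ZMod p) :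
    HasEvenPeriodLE (matE k) (2 * p) := by
  have hp3 : 3 ≤ p := (Fact.out : p.Prime).two_le.lt_of_ne' hp
  have hp_odd : p = 2 * (p / 2) + 1 := (Nat.two_mul_div_two_add_one_of_odd
    ((Fact.out : p.Prime).odd_of_ne_two hp)).symm
  have h2 : (2 : ZMod p) ≠ 0 := Ring.two_ne_zero (by rwa [ZMod.ringChar_zmod_n])
  obtain ⟨c, rfl⟩ : ∃ c, k = 2 * c := ⟨k / 2, (mul_div_cancel₀ k h2).symm⟩
  have hpow := matE_two_mul_pow_prime hp c
  by_cases hd : c * c - 1 = 0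
  · refine ⟨2 * p, by omega, even_two_mul p, le_rfl, ?_⟩
    rw [hd, zero_pow (by omega), zero_smul, add_zero] at hpow
    rw [pow_mul', hpow, smul_pow, one_pow, sq, sub_eq_zero.mp hd, one_smul]
  rcases ZMod.pow_div_two_eq_neg_one_or_one p hd with hx | hx
  · refine ⟨p - 1, by omega, ⟨p / 2, by omega⟩, by omega, ?_⟩
    rw [hx, one_smul, add_sub_cancel] at hpow
    calc matE (2 * c) ^ (p - 1)
        = matE (2 * c) ^ (p - 1) * (matE (2 * c) * ((2 * c) • 1 - matE (2 * c))) := by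
          rw [matE_mul_sub_matE, mul_one]
      _ = matE (2 * c) ^ p * ((2 * c) • 1 - matE (2 * c)) := by
          rw [← mul_assoc, ← pow_succ, Nat.sub_add_cancel (by omega)]
      _ = 1 := by rw [hpow, matE_mul_sub_matE]
  · refine ⟨p + 1, by omega, ⟨p / 2 + 1, by omega⟩, by omega, ?_⟩
    rw [hx, neg_one_smul] at hpow
    have hinv : c • 1 + -(matE (2 * c) - c • 1) = (2 * c) • 1 - matE (2 * c) := by
      rw [two_mul, add_smul]; abel
    rw [pow_succ, hpow, hinv, sub_matE_mul_matE]

theorem HasEvenPeriodLE.matE_pow {p e₀ e c : ℕ} {k : ℤ} (hp : 0 < p) (he₀ : 1 ≤ e₀)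
    (h : HasEvenPeriodLE (matE (k : ZMod (p ^ e₀))) (c * p ^ e₀)) (he : e₀ ≤ e) :
    HasEvenPeriodLE (matE (k : ZMod (p ^ e))) (c * p ^ e) := by
  induction e, he using Nat.le_induction with
  | base => exact h
  | succ e he ih =>
    rw [pow_succ, ← mul_assoc]
    exact ih.matE_mul hp (dvd_pow_self p (by omega))

theorem hasEvenPeriodLE_matE_eight (k : ZMod 8) : HasEvenPeriodLE (matE k) 8 := by
  have h : ∀ k : ZMod 8, matE k ^ 6 = 1 ∨ matE k ^ 8 = 1 := by decide
  rcases h k with h6 | h8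
  · exact ⟨6, by norm_num, by decide, by norm_num, h6⟩
  · exact ⟨8, by norm_num, by decide, le_rfl, h8⟩

theorem hasEvenPeriodLE_matE_two_pow {a : ℕ} (ha : 3 ≤ a) (k : ℤ) :
    HasEvenPeriodLE (matE (k : ZMod (2 ^ a))) (2 ^ a) := by
  simpa using HasEvenPeriodLE.matE_pow (c := 1) two_pos (by norm_num)
    (hasEvenPeriodLE_matE_eight k) ha

theorem hasEvenPeriodLE_matE_odd {q : ℕ} (hq : Odd q) (k : ℤ) :
    HasEvenPeriodLE (matE (k : ZMod q)) (2 * q) := by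
  induction q using Nat.recOnPosPrimePosCoprime with
  | prime_pow p e hp he =>
    have hp2 : p ≠ 2 := by
      rintro rfl; exact (Nat.not_even_iff_odd.mpr hq) ((Nat.even_pow' he.ne').mpr even_two)
    have := Fact.mk hp
    exact HasEvenPeriodLE.matE_pow hp.pos (le_refl 1)
      (by rw [pow_one]; exact hasEvenPeriodLE_matE_prime hp2 (k : ZMod p)) he
  | zero => exact absurd hq (by decide)
  | one => exact ⟨2, two_pos, even_two, le_rfl, Subsingleton.elim _ _⟩
  | coprime a b _ _ hab iha ihb =>
    obtain ⟨ha, hb⟩ := Nat.odd_mul.mp hq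
    exact (iha ha).matE_mul_of_coprime hab (ihb hb) (le_of_eq (by ring))

theorem stmt16 (N : ℕ) (h8 : 8 ∣ N) (hN : 8 ≤ N)
    (k : ℤ) (l : ℕ) (hl : minMonSize (k : ZMod N) l) :
    l ≤ N := by
  have hN0 : N ≠ 0 := by omega
  have ha : 3 ≤ N.factorization 2 :=
    (Nat.prime_two.pow_dvd_iff_le_factorization hN0).mp (by simpa using h8)
  have hq : Odd (N / 2 ^ N.factorization 2) :=
    Nat.odd_iff.mpr (Nat.two_dvd_ne_zero.mp (Nat.not_dvd_ordCompl Nat.prime_two hN0))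
  have hcop : (2 ^ N.factorization 2).Coprime (N / 2 ^ N.factorization 2) :=
    Nat.Coprime.pow_left _ (Nat.coprime_two_left.mpr hq)
  obtain ⟨m, hm0, -, hmN, hm⟩ := (hasEvenPeriodLE_matE_two_pow ha k).matE_mul_of_coprime hcop
    (hasEvenPeriodLE_matE_odd hq k) (mul_left_comm _ _ _).le
  rw [Nat.ordProj_mul_ordCompl_eq_self] at hm hmN
  exact (hl.2.2 m hm0 (Or.inl hm)).trans hmN
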